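/- The subspace Σ_A^Z \ {Ø} of the two-sided full shift over a countably infinite alphabet A is first countable, but is neither second countable nor separable. -/

import Mathlib

open Set Topology Filter TopologicalSpace

universe u

/-- The two-sided full shift over `A`: sequences over `A ∪ {ø}` (with `ø = none`)
in which the empty letter propagates to the right. -/
def SigmaZ (A : Type u) : Type u :=
  {x : ℤ → Option A // ∀ i, x i = none → x (i + 1) = none}

namespace SigmaZ

variable {A : Type u}

/-- The generalized cylinder `Z(x, F)`, where the finite nonempty sequence `x` is
encoded by its length `k` and its letters `w i` for `i ≤ k`. -/
def cyl (k : ℤ) (w : ℤ → A) (F : Finset A) : Set (SigmaZ A) :=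
  {y | (∀ i ≤ k, y.1 i = some (w i)) ∧ ∀ a ∈ F, y.1 (k + 1) ≠ some a}

/-- Generalized cylinders together with complements of finite unions of cylinders `Z(x)`. -/
def basicSets (A : Type u) : Set (Set (SigmaZ A)) :=
  {s | (∃ (k : ℤ) (w : ℤ → A) (F : Finset A), s = cyl k w F) ∨
    ∃ (n : ℕ) (ks : Fin n → ℤ) (ws : Fin n → ℤ → A),
      s = (⋃ j, cyl (ks j) (ws j) ∅)ᶜ}

instance : TopologicalSpace (SigmaZ A) :=
  TopologicalSpace.generateFrom (basicSets A)

/-- The empty sequence `Ø`. -/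
def emptySeq (A : Type u) : SigmaZ A := ⟨fun _ => none, fun _ _ => rfl⟩

/-- The shift map. -/
def shift (x : SigmaZ A) : SigmaZ A :=
  ⟨fun i => x.1 (i + 1), fun i h => x.2 (i + 1) h⟩

end SigmaZ

namespace SigmaZ

variable {A : Type u}

lemma isOpen_cyl (k : ℤ) (w : ℤ → A) (F : Finset A) : IsOpen (cyl k w F) :=
  TopologicalSpace.isOpen_generateFrom_of_mem (Or.inl ⟨k, w, F, rfl⟩)

lemma none_mono (y : SigmaZ A) {i j : ℤ} (h : y.1 i = none) (hij : i ≤ j) : y.1 j = none :=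
  Int.le_induction (motive := fun j _ => y.1 j = none) h (fun n _ ih => y.2 n ih) j hij

lemma wit (y : SigmaZ A) {n : ℕ} {ks : Fin n → ℤ} {ws : Fin n → ℤ → A}
    (hys : y ∈ (⋃ j : Fin n, cyl (ks j) (ws j) (∅ : Finset A))ᶜ) :
    ∀ j, ∃ i ≤ ks j, y.1 i ≠ some (ws j i) := by
  intro j
  have hj : y ∉ cyl (ks j) (ws j) (∅ : Finset A) := fun h => hys (Set.mem_iUnion.2 ⟨j, h⟩)
  by_contra hcon
  push_neg at hcon
  exact hj ⟨fun i hi => hcon i hi, fun a ha => absurd ha (Finset.notMem_empty a)⟩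

lemma exists_cyl_subset_fin (y : SigmaZ A) (k : ℤ) (w : ℤ → A)
    (hw : ∀ i ≤ k, y.1 i = some (w i)) (hk : y.1 (k + 1) = none)
    {s : Set (SigmaZ A)} (hs : s ∈ basicSets A) (hys : y ∈ s) :
    ∃ F : Finset A, cyl k w F ⊆ s := by
  classical
  rcases hs with ⟨k', w', F', rfl⟩ | ⟨n, ks, ws, rfl⟩
  · obtain ⟨h1, h2⟩ := hys
    have hk' : k' ≤ k := by
      by_contra h
      push_neg at h
      have h3 := h1 k' le_rfl
      rw [none_mono y hk (by omega)] at h3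
      exact nomatch h3
    refine ⟨F', fun z hz => ⟨?_, ?_⟩⟩
    · intro i hi
      have hzi := hz.1 i (hi.trans hk')
      have heq : some (w i) = some (w' i) := by
        rw [← hw i (hi.trans hk'), h1 i hi]
      rw [hzi, heq]
    · intro a ha
      rcases eq_or_lt_of_le hk' with h | h
      · subst h
        exact hz.2 a ha
      · have hle : k' + 1 ≤ k := h
        have hz1 : z.1 (k' + 1) = some (w (k' + 1)) := hz.1 _ hle
        have hy1 := h2 a ha
        rw [hw _ hle] at hy1
        rw [hz1]; exact hy1
  · obtain hwits := wit y hys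
    refine ⟨Finset.image (fun j => ws j (k + 1)) Finset.univ, fun z hz hmem => ?_⟩
    rcases Set.mem_iUnion.1 hmem with ⟨j, hj⟩
    obtain ⟨i, hij, hyi⟩ := hwits j
    rcases le_or_gt i k with hik | hik
    · apply hyi
      rw [hw i hik, ← hz.1 i hik, hj.1 i hij]
    · have hk1 : k + 1 ≤ ks j := by omega
      exact hz.2 (ws j (k + 1)) (Finset.mem_image_of_mem _ (Finset.mem_univ j))
        (hj.1 (k + 1) hk1)

lemma mem_cyl_self_fin (y : SigmaZ A) (k : ℤ) (w : ℤ → A)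
    (hw : ∀ i ≤ k, y.1 i = some (w i)) (hk : y.1 (k + 1) = none) (F : Finset A) :
    y ∈ cyl k w F := by
  refine ⟨hw, fun a _ h => ?_⟩
  rw [hk] at h
  exact nomatch h

lemma nhds_hasBasis_fin (y : SigmaZ A) (k : ℤ) (w : ℤ → A)
    (hw : ∀ i ≤ k, y.1 i = some (w i)) (hk : y.1 (k + 1) = none) :
    (𝓝 y).HasBasis (fun _ : Finset A => True) (fun F => cyl k w F) := by
  classical
  have heq : 𝓝 y = ⨅ F : Finset A, 𝓟 (cyl k w F) := by
    apply le_antisymm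
    · exact le_iInf fun F => le_principal_iff.2
        ((isOpen_cyl k w F).mem_nhds (mem_cyl_self_fin y k w hw hk F))
    · rw [nhds_generateFrom]
      refine le_iInf₂ fun s hs => ?_
      obtain ⟨F, hF⟩ := exists_cyl_subset_fin y k w hw hk hs.2 hs.1
      exact iInf_le_of_le F (principal_mono.2 hF)
  rw [heq]
  apply Filter.hasBasis_iInf_principal
  intro F G
  exact ⟨F ∪ G,
    fun z hz => ⟨hz.1, fun a ha => hz.2 a (Finset.mem_union_left _ ha)⟩,
    fun z hz => ⟨hz.1, fun a ha => hz.2 a (Finset.mem_union_right _ ha)⟩⟩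

lemma exists_cyl_subset_inf (y : SigmaZ A) (w : ℤ → A)
    (hw : ∀ i, y.1 i = some (w i))
    {s : Set (SigmaZ A)} (hs : s ∈ basicSets A) (hys : y ∈ s) :
    ∃ k : ℤ, cyl k w ∅ ⊆ s := by
  rcases hs with ⟨k0, w0, F0, rfl⟩ | ⟨n, ks, ws, rfl⟩
  · obtain ⟨h1, h2⟩ := hys
    refine ⟨k0 + 1, fun z hz => ⟨?_, ?_⟩⟩
    · intro i hi
      have hzi := hz.1 i (by omega)
      have heq : some (w i) = some (w0 i) := by rw [← hw i, h1 i hi]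
      rw [hzi, heq]
    · intro a ha
      have hz1 : z.1 (k0 + 1) = some (w (k0 + 1)) := hz.1 _ le_rfl
      have hy1 := h2 a ha
      rw [hw (k0 + 1)] at hy1
      rw [hz1]; exact hy1
  · obtain hwits := wit y hys
    choose iw hile hne using hwits
    obtain ⟨M, hM⟩ := Finset.exists_le (Finset.univ.image iw)
    refine ⟨M, fun z hz hmem => ?_⟩
    rcases Set.mem_iUnion.1 hmem with ⟨j, hj⟩
    have h1 : z.1 (iw j) = some (ws j (iw j)) := hj.1 _ (hile j)
    have h2 : z.1 (iw j) = some (w (iw j)) :=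
      hz.1 _ (hM _ (Finset.mem_image_of_mem _ (Finset.mem_univ j)))
    apply hne j
    rw [hw (iw j), ← h1, h2]

lemma nhds_hasBasis_inf (y : SigmaZ A) (w : ℤ → A)
    (hw : ∀ i, y.1 i = some (w i)) :
    (𝓝 y).HasBasis (fun _ : ℤ => True) (fun k => cyl k w ∅) := by
  have heq : 𝓝 y = ⨅ k : ℤ, 𝓟 (cyl k w ∅) := by
    apply le_antisymm
    · refine le_iInf fun k => le_principal_iff.2 ((isOpen_cyl k w ∅).mem_nhds ?_)
      exact ⟨fun i _ => hw i, fun a ha => absurd ha (Finset.notMem_empty a)⟩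
    · rw [nhds_generateFrom]
      refine le_iInf₂ fun s hs => ?_
      obtain ⟨k, hk⟩ := exists_cyl_subset_inf y w hw hs.2 hs.1
      exact iInf_le_of_le k (principal_mono.2 hk)
  rw [heq]
  apply Filter.hasBasis_iInf_principal
  intro k1 k2
  exact ⟨max k1 k2,
    fun z hz => ⟨fun i hi => hz.1 i (hi.trans (le_max_left _ _)), fun a ha => absurd ha (Finset.notMem_empty a)⟩,
    fun z hz => ⟨fun i hi => hz.1 i (hi.trans (le_max_right _ _)), fun a ha => absurd ha (Finset.notMem_empty a)⟩⟩

lemma nhds_isCountablyGenerated [Countable A] [Nonempty A] (y : SigmaZ A)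
    (hy : y ≠ emptySeq A) : (𝓝 y).IsCountablyGenerated := by
  classical
  set w : ℤ → A := fun i => (y.1 i).getD (Classical.arbitrary A) with hwdef
  have hsome : ∀ i, y.1 i ≠ none → y.1 i = some (w i) := by
    intro i hi
    cases h : y.1 i with
    | none => exact absurd h hi
    | some a => simp [hwdef, h]
  by_cases hall : ∀ i, y.1 i ≠ none
  · exact (nhds_hasBasis_inf y w fun i => hsome i (hall i)).isCountablyGenerated
  · push_neg at hall
    obtain ⟨i0, hi0⟩ := hall
    have hex : ∃ i1, y.1 i1 ≠ none := by
      by_contra hcon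
      push_neg at hcon
      exact hy (Subtype.ext (funext fun i => hcon i))
    obtain ⟨i1, hi1⟩ := hex
    have hbdd : ∃ b : ℤ, ∀ z : ℤ, y.1 z = none → b ≤ z := by
      refine ⟨i1 + 1, fun z hz => ?_⟩
      by_contra h
      push_neg at h
      exact hi1 (none_mono y hz (by omega))
    obtain ⟨m, hm, hmin⟩ := Int.exists_least_of_bdd hbdd ⟨i0, hi0⟩
    have hk : y.1 ((m - 1) + 1) = none := by
      have : m - 1 + 1 = m := by omega
      rw [this]; exact hm
    have hwle : ∀ i ≤ m - 1, y.1 i = some (w i) := by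
      intro i hi
      refine hsome i fun h => ?_
      have := hmin i h
      omega
    exact (nhds_hasBasis_fin y (m - 1) w hwle hk).isCountablyGenerated

end SigmaZ

/-- The subspace `Σ_A^ℤ \ {Ø}` is first countable, but neither second countable
nor separable. -/
theorem stmt3 {A : Type u} [Countable A] [Infinite A] :
    FirstCountableTopology {y : SigmaZ A // y ≠ SigmaZ.emptySeq A} ∧
    ¬ SecondCountableTopology {y : SigmaZ A // y ≠ SigmaZ.emptySeq A} ∧
    ¬ SeparableSpace {y : SigmaZ A // y ≠ SigmaZ.emptySeq A} := by
  classical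
  have hnsep : ¬ SeparableSpace {y : SigmaZ A // y ≠ SigmaZ.emptySeq A} := by
    intro hsep
    obtain ⟨D, hDc, hDd⟩ := TopologicalSpace.exists_countable_dense
      {y : SigmaZ A // y ≠ SigmaZ.emptySeq A}
    set wf : (ℕ → A) → ℤ → A := fun g i => g (-i).toNat with hwf
    have hyg : ∀ g : ℕ → A, ∃ y : SigmaZ A, y ≠ SigmaZ.emptySeq A ∧
        y ∈ SigmaZ.cyl 0 (wf g) (∅ : Finset A) := by
      intro g
      refine ⟨⟨fun i => if i ≤ 0 then some (wf g i) else none, ?_⟩, ?_, ?_, ?_⟩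
      · intro i hi
        dsimp only at hi ⊢
        by_cases h : i ≤ 0
        · rw [if_pos h] at hi; exact nomatch hi
        · rw [if_neg (by omega : ¬ i + 1 ≤ 0)]
      · intro h
        have h0 : (if (0:ℤ) ≤ 0 then some (wf g 0) else none) = none :=
          congrFun (congrArg Subtype.val h) 0
        rw [if_pos le_rfl] at h0
        exact nomatch h0
      · intro i hi
        exact if_pos hi
      · intro a ha
        exact absurd ha (Finset.notMem_empty a)
    have key : ∀ g : ℕ → A, ∃ d ∈ D,
        (d : {y : SigmaZ A // y ≠ SigmaZ.emptySeq A}).1 ∈ SigmaZ.cyl 0 (wf g) (∅ : Finset A) := by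
      intro g
      have hopen : IsOpen ((Subtype.val) ⁻¹' (SigmaZ.cyl 0 (wf g) (∅ : Finset A)) :
          Set {y : SigmaZ A // y ≠ SigmaZ.emptySeq A}) :=
        (SigmaZ.isOpen_cyl _ _ _).preimage continuous_subtype_val
      obtain ⟨y, hy1, hy2⟩ := hyg g
      obtain ⟨d, hdD, hd⟩ := hDd.exists_mem_open hopen ⟨⟨y, hy1⟩, hy2⟩
      exact ⟨d, hdD, hd⟩
    choose d hdD hd using key
    have hinj : Function.Injective d := by
      intro g g' h
      funext n
      have h1 := (hd g).1 (-(n : ℤ)) (neg_nonpos.2 (Int.natCast_nonneg n))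
      have h2 := (hd g').1 (-(n : ℤ)) (neg_nonpos.2 (Int.natCast_nonneg n))
      rw [h] at h1
      have h3 := h1.symm.trans h2
      have h4 := Option.some.inj h3
      simpa [hwf] using h4
    have hcnt : Countable (ℕ → A) := by
      haveI : Countable D := hDc.to_subtype
      have hinj' : Function.Injective (fun g => (⟨d g, hdD g⟩ : D)) := by
        intro g g' h
        exact hinj (congrArg Subtype.val h)
      exact hinj'.countable
    -- but ℕ → A is uncountable
    obtain ⟨a, b, hab⟩ := exists_pair_ne A
    obtain ⟨enc, henc⟩ := (countable_iff_exists_injective _).1 hcnt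
    apply Function.cantor_injective (fun s : Set ℕ => enc (fun n => if n ∈ s then a else b))
    intro s t hst
    have hfun := henc hst
    ext n
    have h3 := congrFun hfun n
    by_cases hs : n ∈ s <;> by_cases ht : n ∈ t <;> simp [hs, ht] at h3 ⊢
    · exact absurd h3 hab
    · exact absurd h3.symm hab
  refine ⟨⟨fun x => ?_⟩, fun h => hnsep (by exact SecondCountableTopology.to_separableSpace), hnsep⟩
  have h1 : (𝓝 x.1).IsCountablyGenerated := SigmaZ.nhds_isCountablyGenerated x.1 x.2
  rw [nhds_induced]
  exact Filter.comap.isCountablyGenerated _ _
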